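/- In the abstract setting, combining the previous results: if u minimizes J over V and u_h^{ms} is the HMM approximation, and if ‖v‖ ≤ C_h |||v||| holds for all v ∈ V_f with f(v) = (F, v), then |||u - u_h^{ms}||| ≤ C_h ‖F‖. -/

import Mathlib

/-!
Both `u` and `w := R_h (P₀ u)` satisfy Euler equations: `a(u, v) = (F, v)` for all `v`, and
`a(w, z) = 0` whenever `P₀ z = 0`. Since `P₀ (u - w) = 0`, testing with `e := u - w` gives
`|||e|||² = (F, e) ≤ ‖F‖ ‖e‖ ≤ C_h ‖F‖ |||e|||`. Finally `J(v) = J(u) + ½ |||u - v|||²`, and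
`u_h^{ms}` minimizes `J` over the range of `R_h`, which contains `w`; so
`|||u - u_h^{ms}||| ≤ |||u - w|||`.
-/

open RealInnerProductSpace

lemma eq_zero_of_forall_sq_mul_add_mul_nonneg {A c : ℝ} (h : ∀ t : ℝ, 0 ≤ t ^ 2 * A + t * c) :
    c = 0 := by
  by_contra hc
  set t := -c / (2 * (|A| + 1))
  have hscaled : (2 * (|A| + 1)) ^ 2 * (t ^ 2 * A + t * c) = c ^ 2 * (A - 2 * (|A| + 1)) := by
    simp only [t]
    field_simp
    ring
  have hneg : c ^ 2 * (A - 2 * (|A| + 1)) < 0 :=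
    mul_neg_of_pos_of_neg (by positivity) (by linarith [le_abs_self A, abs_nonneg A])
  have hnonneg := mul_nonneg (sq_nonneg (2 * (|A| + 1))) (h t)
  rw [hscaled] at hnonneg
  linarith

section Energy

variable {V : Type*} [AddCommGroup V] [Module ℝ V]

noncomputable def energy (a : V →ₗ[ℝ] V →ₗ[ℝ] ℝ) (ℓ : V →ₗ[ℝ] ℝ) (v : V) : ℝ :=
  1 / 2 * a v v - ℓ v

variable {a : V →ₗ[ℝ] V →ₗ[ℝ] ℝ} {ℓ : V →ₗ[ℝ] ℝ}

lemma energy_add_smul (hsymm : ∀ u v, a u v = a v u) (u z : V) (t : ℝ) :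
    energy a ℓ (u + t • z) = energy a ℓ u + t * (a u z - ℓ z) + t ^ 2 / 2 * a z z := by
  simp only [energy, map_add, map_smul, LinearMap.add_apply, LinearMap.smul_apply, smul_eq_mul,
    hsymm z u]
  ring

lemma apply_eq_of_forall_energy_le (hsymm : ∀ u v, a u v = a v u) {u z : V}
    (hmin : ∀ t : ℝ, energy a ℓ u ≤ energy a ℓ (u + t • z)) : a u z = ℓ z := by
  have hquad : ∀ t : ℝ, 0 ≤ t ^ 2 * (a z z / 2) + t * (a u z - ℓ z) := fun t => by
    have := hmin t
    rw [energy_add_smul hsymm] at this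
    linarith
  linarith [eq_zero_of_forall_sq_mul_add_mul_nonneg hquad]

lemma apply_eq_zero_of_forall_energy_le_of_map_eq (hsymm : ∀ u v, a u v = a v u)
    {W : Type*} [AddCommGroup W] [Module ℝ W] (P : V →ₗ[ℝ] W) {w z : V}
    (hmin : ∀ v, P v = P w → energy a 0 w ≤ energy a 0 v) (hz : P z = 0) : a w z = 0 :=
  apply_eq_of_forall_energy_le (ℓ := 0) hsymm fun t => hmin _ (by simp [hz])

lemma energy_eq_add_of_forall_apply_eq (hsymm : ∀ u v, a u v = a v u) {u : V}
    (hu : ∀ v, a u v = ℓ v) (v : V) :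
    energy a ℓ v = energy a ℓ u + 1 / 2 * a (u - v) (u - v) := by
  have h := energy_add_smul (ℓ := ℓ) hsymm u (v - u) 1
  have hflip : a (v - u) (v - u) = a (u - v) (u - v) := by
    rw [← neg_sub u v, map_neg, LinearMap.map_neg₂, neg_neg]
  rw [one_smul, add_sub_cancel, hu, hflip] at h
  rw [h]
  ring

end Energy

lemma sqrt_le_of_le_mul_sqrt {x c : ℝ} (hc : 0 ≤ c) (h : x ≤ c * √x) : √x ≤ c := by
  rcases (Real.sqrt_nonneg x).eq_or_lt with h0 | hpos
  · rwa [← h0]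
  · refine le_of_mul_le_mul_right ?_ hpos
    rwa [Real.mul_self_sqrt (Real.sqrt_pos.mp hpos).le]

lemma sqrt_apply_sub_le {V : Type*} [NormedAddCommGroup V] [InnerProductSpace ℝ V]
    {a : V →ₗ[ℝ] V →ₗ[ℝ] ℝ} {F u w : V} {C : ℝ} (hC : 0 ≤ C) (hu : ∀ v, a u v = ⟪F, v⟫)
    (hw : a w (u - w) = 0) (happrox : ‖u - w‖ ≤ C * √(a (u - w) (u - w))) :
    √(a (u - w) (u - w)) ≤ C * ‖F‖ := by
  refine sqrt_le_of_le_mul_sqrt (by positivity) ?_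
  calc a (u - w) (u - w) = ⟪F, u - w⟫ := by rw [LinearMap.map_sub₂, hu, hw, sub_zero]
    _ ≤ ‖F‖ * ‖u - w‖ := real_inner_le_norm F _
    _ ≤ ‖F‖ * (C * √(a (u - w) (u - w))) := by gcongr
    _ = C * ‖F‖ * √(a (u - w) (u - w)) := by ring

theorem stmt8_general
    {V : Type*} [NormedAddCommGroup V] [InnerProductSpace ℝ V]
    (a : V →ₗ[ℝ] V →ₗ[ℝ] ℝ)
    (hsymm : ∀ u v : V, a u v = a v u)
    (F : V) (f : V → ℝ) (hf : ∀ v, f v = inner ℝ F v)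
    (J J0 : V → ℝ)
    (hJ : ∀ v, J v = (1 / 2) * a v v - f v)
    (hJ0 : ∀ v, J0 v = (1 / 2) * a v v)
    (Vh : Submodule ℝ V) [CompleteSpace Vh]
    (P0 : V → V) (hP0 : ∀ v, P0 v = (Vh.orthogonalProjection v : V))
    (Vf : Set V) (hVf : Vf = {v : V | P0 v = 0})
    (Rh : V → V)
    (hRh : ∀ vh ∈ Vh, P0 (Rh vh) = vh ∧ ∀ v : V, P0 v = vh → J0 (Rh vh) ≤ J0 v)
    (Ch : ℝ) (hCh : 0 < Ch)
    (happrox : ∀ v ∈ Vf, ‖v‖ ≤ Ch * Real.sqrt (a v v))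
    (u : V) (hu : ∀ v : V, J u ≤ J v)
    (uh : V) (huhmin : ∀ vh ∈ Vh, J (Rh uh) ≤ J (Rh vh))
    (uhms : V) (huhms : uhms = Rh uh) :
    Real.sqrt (a (u - uhms) (u - uhms)) ≤ Ch * ‖F‖ := by
  have hJ : J = energy a (innerSL ℝ F).toLinearMap := funext fun v => by simp [energy, hJ, hf]
  have hJ0 : J0 = energy a 0 := funext fun v => by simp [energy, hJ0]
  have hP0 : P0 = Vh.starProjection := funext hP0
  subst hJ hJ0 hP0 hVf huhms
  have hEuler (v : V) : a u v = ⟪F, v⟫ :=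
    apply_eq_of_forall_energy_le hsymm fun t => hu (u + t • v)
  have hPu := Vh.starProjection_apply_mem u
  obtain ⟨hPw, hwmin⟩ := hRh _ hPu
  set w := Rh (Vh.starProjection u)
  have hPe : Vh.starProjection (u - w) = 0 := by rw [map_sub, hPw, sub_self]
  have hwe : a w (u - w) = 0 := apply_eq_zero_of_forall_energy_le_of_map_eq hsymm
    Vh.starProjection.toLinearMap (fun v hv => hwmin v (hv.trans hPw)) hPe
  have hcmp : a (u - Rh uh) (u - Rh uh) ≤ a (u - w) (u - w) := by
    have := huhmin _ hPu
    rw [energy_eq_add_of_forall_apply_eq hsymm hEuler,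
      energy_eq_add_of_forall_apply_eq hsymm hEuler w] at this
    linarith
  calc √(a (u - Rh uh) (u - Rh uh)) ≤ √(a (u - w) (u - w)) := Real.sqrt_le_sqrt hcmp
    _ ≤ Ch * ‖F‖ := sqrt_apply_sub_le hCh.le hEuler hwe (happrox _ hPe)

/-- If `u` minimizes `J` over `V`, `u_h^ms = R_h(u_h)` is the HMM
approximation (with `u_h` minimizing `v_h ↦ J(R_h(v_h))` over `V_h`), `f(v) = ⟪F, v⟫`,
and `‖v‖ ≤ C_h |||v|||` for all `v ∈ V_f`, then `|||u - u_h^ms||| ≤ C_h ‖F‖`. -/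
theorem stmt8
    {V : Type*} [NormedAddCommGroup V] [InnerProductSpace ℝ V] [CompleteSpace V]
    (a : V →ₗ[ℝ] V →ₗ[ℝ] ℝ)
    (hsymm : ∀ u v : V, a u v = a v u)
    (M : ℝ) (hcont : ∀ u v : V, |a u v| ≤ M * ‖u‖ * ‖v‖)
    (α : ℝ) (hα : 0 < α) (hcoer : ∀ v : V, α * ‖v‖ ^ 2 ≤ a v v)
    (F : V) (f : V → ℝ) (hf : ∀ v, f v = inner ℝ F v)
    (J J0 : V → ℝ)
    (hJ : ∀ v, J v = (1 / 2) * a v v - f v)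
    (hJ0 : ∀ v, J0 v = (1 / 2) * a v v)
    (Vh : Submodule ℝ V) [CompleteSpace Vh]
    (P0 : V → V) (hP0 : ∀ v, P0 v = (Vh.orthogonalProjection v : V))
    (Vf : Set V) (hVf : Vf = {v : V | P0 v = 0})
    (Rh : V → V)
    (hRh : ∀ vh ∈ Vh, P0 (Rh vh) = vh ∧ ∀ v : V, P0 v = vh → J0 (Rh vh) ≤ J0 v)
    (Ch : ℝ) (hCh : 0 < Ch)
    (happrox : ∀ v ∈ Vf, ‖v‖ ≤ Ch * Real.sqrt (a v v))
    (u : V) (hu : ∀ v : V, J u ≤ J v)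
    (uh : V) (huh : uh ∈ Vh) (huhmin : ∀ vh ∈ Vh, J (Rh uh) ≤ J (Rh vh))
    (uhms : V) (huhms : uhms = Rh uh) :
    Real.sqrt (a (u - uhms) (u - uhms)) ≤ Ch * ‖F‖ :=
  stmt8_general a hsymm F f hf J J0 hJ hJ0 Vh P0 hP0 Vf hVf Rh hRh Ch hCh happrox u hu uh huhmin
    uhms huhms
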